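/- arXiv:1809.06519 — 4 statements merged into one kernel-verified Lean document; each statement's English description precedes it below -/
import Mathlib

section
/- Let $c \in C[0,t_0]$, $h \in C^1[0,t_0]$ with $h \geq 0$, $h(0)=0$, and $h \not\equiv 0$ in any neighborhood of $x=0$. If $v$ solves $v'' + c(x)v = h'$ on $[0,t_0]$ with $v(0) = v'(0) = 0$, then there exists $\delta > 0$ such that $v(x) > 0$ for all $x \in (0,\delta]$. -/
open Set Filter Topology MeasureTheory intervalIntegral
open scoped Interval

/-! Integrating the equation twice gives the Volterra form `v = H - ∫₀ˣ∫₀ˢ c v` with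
`H x = ∫₀ˣ h`, so `|v - H| ≤ M x² · max_{[0,x]} |v|` where `M` bounds `|c|`. For `M x² ≤ 1/4`
this makes `max_{[0,x]} |v| ≤ 4/3 · H x` and then `v x ≥ 2/3 · H x`, while `H x > 0` because `h`
is nonnegative and not identically zero on `[0, x]`. -/

theorem integral_derivWithin_Icc_eq_sub {E : Type*} [NormedAddCommGroup E] [NormedSpace ℝ E]
    [CompleteSpace E] {f : ℝ → E} {a b x : ℝ} (hf : ContDiffOn ℝ 1 f (Icc a b))
    (hx : x ∈ Icc a b) :
    ∫ y in a..x, derivWithin f (Icc a b) y = f x - f a := by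
  rw [← integral_deriv_of_contDiffOn_Icc (hf.mono (Icc_subset_Icc_right hx.2)) hx.1,
    integral_of_le hx.1, integral_of_le hx.1, ← restrict_Ioo_eq_restrict_Ioc]
  refine integral_congr_ae ?_
  filter_upwards [self_mem_ae_restrict measurableSet_Ioo] with y hy
  exact derivWithin_of_mem_nhds (Icc_mem_nhds hy.1 (hy.2.trans_le hx.2))

theorem norm_integral_integral_le {E : Type*} [NormedAddCommGroup E] [NormedSpace ℝ E]
    {f : ℝ → E} {B x : ℝ} (hx : 0 ≤ x) (hB : 0 ≤ B) (hf : ∀ u ∈ Ioc 0 x, ‖f u‖ ≤ B) :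
    ‖∫ s in 0..x, ∫ u in 0..s, f u‖ ≤ B * x ^ 2 := by
  have hinner : ∀ s ∈ Ι 0 x, ‖∫ u in 0..s, f u‖ ≤ B * x := by
    intro s hs
    rw [uIoc_of_le hx] at hs
    calc ‖∫ u in 0..s, f u‖ ≤ B * |s - 0| :=
          norm_integral_le_of_norm_le_const fun u hu ↦ by
            rw [uIoc_of_le hs.1.le] at hu
            exact hf u ⟨hu.1, hu.2.trans hs.2⟩
      _ ≤ B * x := by
          rw [sub_zero, abs_of_pos hs.1]
          exact mul_le_mul_of_nonneg_left hs.2 hB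
  calc ‖∫ s in 0..x, ∫ u in 0..s, f u‖ ≤ B * x * |x - 0| := norm_integral_le_of_norm_le_const hinner
    _ = B * x ^ 2 := by rw [sub_zero, abs_of_nonneg hx]; ring

theorem monotoneOn_integral_of_nonneg {f : ℝ → ℝ} {a b : ℝ} (hf : ContinuousOn f (Icc a b))
    (hf0 : ∀ x ∈ Icc a b, 0 ≤ f x) : MonotoneOn (fun y ↦ ∫ s in a..y, f s) (Icc a b) :=
  fun _ hx _ hy hxy ↦ integral_mono_interval le_rfl hx.1 hxy
    ((ae_restrict_iff' measurableSet_Ioc).2 (ae_of_all _ fun s hs ↦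
      hf0 s ⟨hs.1.le, hs.2.trans hy.2⟩))
    ((hf.mono (Icc_subset_Icc_right hy.2)).intervalIntegrable_of_Icc hy.1)

theorem MonotoneOn.two_mul_le_three_mul_of_abs_sub_le {v H : ℝ → ℝ} {M x : ℝ}
    (hH : MonotoneOn H (Icc 0 x)) (hH0 : 0 ≤ H 0) (hv : ContinuousOn v (Icc 0 x)) (hx : 0 ≤ x)
    (hM : 0 ≤ M) (hMx : M * x ^ 2 ≤ 1 / 4)
    (hclose : ∀ s ∈ Icc 0 x, ∀ K, (∀ u ∈ Icc 0 s, |v u| ≤ K) → |v s - H s| ≤ M * K * s ^ 2) :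
    2 * H x ≤ 3 * v x := by
  obtain ⟨s₀, hs₀, hmax⟩ := isCompact_Icc.exists_isMaxOn (nonempty_Icc.2 hx) hv.abs
  set K := |v s₀|
  have hK : ∀ u ∈ Icc 0 x, |v u| ≤ K := fun u hu ↦ hmax hu
  have hsmall : ∀ s ∈ Icc 0 x, M * K * s ^ 2 ≤ K / 4 := fun s hs ↦ by
    have : M * s ^ 2 ≤ M * x ^ 2 := by gcongr; exacts [hs.1, hs.2]
    nlinarith [abs_nonneg (v s₀)]
  have hx_mem : x ∈ Icc 0 x := ⟨hx, le_rfl⟩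
  have hs₀_close : |v s₀ - H s₀| ≤ K / 4 :=
    (hclose s₀ hs₀ K fun u hu ↦ hK u ⟨hu.1, hu.2.trans hs₀.2⟩).trans (hsmall s₀ hs₀)
  have hx_close : |v x - H x| ≤ K / 4 := (hclose x hx_mem K hK).trans (hsmall x hx_mem)
  have hHs₀ : 0 ≤ H s₀ := hH0.trans (hH ⟨le_rfl, hx⟩ hs₀ hs₀.1)
  have hHx : H s₀ ≤ H x := hH hs₀ hx_mem hs₀.2
  -- `K ≤ H s₀ + K / 4 ≤ H x + K / 4` bounds `K`, and then `v x ≥ H x - K / 4`.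
  linarith [abs_sub_abs_le_abs_sub (v s₀) (H s₀), abs_of_nonneg hHs₀, (abs_le.1 hx_close).1]

theorem sub_integral_eq_integral_integral {t0 : ℝ} {h v g : ℝ → ℝ} (ht0 : 0 < t0)
    (hh : ContDiffOn ℝ 1 h (Icc 0 t0)) (hh0 : h 0 = 0) (hv : ContDiffOn ℝ 2 v (Icc 0 t0))
    (hv0 : v 0 = 0) (hv'0 : derivWithin v (Icc 0 t0) 0 = 0)
    (hode : ∀ x ∈ Icc 0 t0,
      derivWithin (derivWithin v (Icc 0 t0)) (Icc 0 t0) x - derivWithin h (Icc 0 t0) x = g x)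
    {x : ℝ} (hx : x ∈ Icc 0 t0) :
    v x - ∫ s in 0..x, h s = ∫ s in 0..x, ∫ u in 0..s, g u := by
  set I := Icc (0 : ℝ) t0
  have h0 : (0 : ℝ) ∈ I := left_mem_Icc.2 ht0.le
  have hv' : ContDiffOn ℝ 1 (derivWithin v I) I :=
    hv.derivWithin (uniqueDiffOn_Icc ht0) (by norm_num)
  have hw : ContDiffOn ℝ 1 (derivWithin v I - h) I := hv'.sub hh
  have hw_eq : ∀ s ∈ I, derivWithin v I s - h s = ∫ u in 0..s, g u := by
    intro s hs
    calc derivWithin v I s - h s = (derivWithin v I - h) s - (derivWithin v I - h) 0 := by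
          simp [hv'0, hh0]
      _ = ∫ u in 0..s, derivWithin (derivWithin v I - h) I u :=
          (integral_derivWithin_Icc_eq_sub hw hs).symm
      _ = ∫ u in 0..s, g u := integral_congr fun u hu ↦ by
          have huI : u ∈ I := uIcc_subset_Icc h0 hs hu
          rw [derivWithin_sub (hv'.differentiableOn one_ne_zero u huI)
            (hh.differentiableOn one_ne_zero u huI), hode u huI]
  have hxI : uIcc 0 x ⊆ I := uIcc_subset_Icc h0 hx
  calc v x - ∫ s in 0..x, h s = (∫ s in 0..x, derivWithin v I s) - ∫ s in 0..x, h s := by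
        rw [integral_derivWithin_Icc_eq_sub (hv.of_le (by norm_num)) hx, hv0, sub_zero]
    _ = ∫ s in 0..x, (derivWithin v I s - h s) :=
        (integral_sub (hv'.continuousOn.mono hxI).intervalIntegrable
          (hh.continuousOn.mono hxI).intervalIntegrable).symm
    _ = ∫ s in 0..x, ∫ u in 0..s, g u := integral_congr fun s hs ↦ hw_eq s (hxI hs)

theorem abs_sub_integral_le {t0 M : ℝ} {c h v : ℝ → ℝ} (ht0 : 0 < t0)
    (hh : ContDiffOn ℝ 1 h (Icc 0 t0)) (hh0 : h 0 = 0) (hv : ContDiffOn ℝ 2 v (Icc 0 t0))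
    (hv0 : v 0 = 0) (hv'0 : derivWithin v (Icc 0 t0) 0 = 0)
    (hode : ∀ x ∈ Icc 0 t0,
      derivWithin (derivWithin v (Icc 0 t0)) (Icc 0 t0) x + c x * v x
        = derivWithin h (Icc 0 t0) x)
    (hcM : ∀ x ∈ Icc 0 t0, |c x| ≤ M) {s K : ℝ} (hs : s ∈ Icc 0 t0)
    (hK : ∀ u ∈ Icc 0 s, |v u| ≤ K) :
    |v s - ∫ u in 0..s, h u| ≤ M * K * s ^ 2 := by
  have hM : 0 ≤ M := (abs_nonneg _).trans (hcM 0 (left_mem_Icc.2 ht0.le))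
  have hK0 : 0 ≤ K := (abs_nonneg _).trans (hK 0 (left_mem_Icc.2 hs.1))
  rw [sub_integral_eq_integral_integral (g := fun u ↦ -(c u * v u)) ht0 hh hh0 hv hv0 hv'0
    (fun u hu ↦ by linarith [hode u hu]) hs, ← Real.norm_eq_abs]
  refine norm_integral_integral_le hs.1 (mul_nonneg hM hK0) fun u hu ↦ ?_
  rw [norm_neg, norm_mul, Real.norm_eq_abs, Real.norm_eq_abs]
  exact mul_le_mul (hcM u ⟨hu.1.le, hu.2.trans hs.2⟩) (hK u (Ioc_subset_Icc_self hu))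
    (abs_nonneg _) hM

/-- If `v'' + c v = h'` on `[0,t₀]` with `v(0) = v'(0) = 0`, where `h ≥ 0`, `h(0) = 0` and
`h ≢ 0` in any neighborhood of `0`, then `v > 0` on some interval `(0, δ]`. -/
theorem positivity_near_origin (t0 : ℝ) (ht0 : 0 < t0) (c h v : ℝ → ℝ)
    (hc : ContinuousOn c (Icc 0 t0))
    (hh : ContDiffOn ℝ 1 h (Icc 0 t0))
    (hhnonneg : ∀ x ∈ Icc (0:ℝ) t0, 0 ≤ h x)
    (hh0 : h 0 = 0)
    (hhnontriv : ∀ ε > (0:ℝ), ∃ x, 0 < x ∧ x < ε ∧ x ≤ t0 ∧ 0 < h x)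
    (hv : ContDiffOn ℝ 2 v (Icc 0 t0))
    (hvode : ∀ x ∈ Icc (0:ℝ) t0,
      derivWithin (derivWithin v (Icc 0 t0)) (Icc 0 t0) x + c x * v x
        = derivWithin h (Icc 0 t0) x)
    (hv0 : v 0 = 0) (hv'0 : derivWithin v (Icc 0 t0) 0 = 0) :
    ∃ δ > (0:ℝ), δ ≤ t0 ∧ ∀ x ∈ Ioc (0:ℝ) δ, 0 < v x := by
  obtain ⟨M, hM⟩ := isCompact_Icc.exists_bound_of_continuousOn hc
  have hcM : ∀ x ∈ Icc 0 t0, |c x| ≤ M := hM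
  have hM0 : 0 ≤ M := (abs_nonneg _).trans (hcM 0 (left_mem_Icc.2 ht0.le))
  have hsmall : ∀ᶠ x in 𝓝[>] 0, x ≤ t0 ∧ M * x ^ 2 ≤ 1 / 4 := by
    have hsq : Tendsto (fun x : ℝ ↦ M * x ^ 2) (𝓝 0) (𝓝 0) :=
      (by fun_prop : Continuous fun x : ℝ ↦ M * x ^ 2).tendsto' 0 0 (by simp)
    exact nhdsWithin_le_nhds
      ((eventually_le_nhds ht0).and (hsq.eventually (ge_mem_nhds (by norm_num))))
  obtain ⟨δ, hδ, hδsmall⟩ := mem_nhdsGT_iff_exists_Ioc_subset.1 hsmall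
  refine ⟨δ, hδ, (hδsmall ⟨hδ, le_rfl⟩).1, fun x hx ↦ ?_⟩
  obtain ⟨hxt0, hMx⟩ := hδsmall hx
  have hIx : Icc 0 x ⊆ Icc 0 t0 := Icc_subset_Icc_right hxt0
  have hH : 0 < ∫ s in 0..x, h s := by
    obtain ⟨y, hy0, hyx, -, hy⟩ := hhnontriv x hx.1
    exact integral_pos hx.1 (hh.continuousOn.mono hIx)
      (fun s hs ↦ hhnonneg s (hIx (Ioc_subset_Icc_self hs))) ⟨y, ⟨hy0.le, hyx.le⟩, hy⟩
  have hmono := monotoneOn_integral_of_nonneg (hh.continuousOn.mono hIx)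
    fun s hs ↦ hhnonneg s (hIx hs)
  have := hmono.two_mul_le_three_mul_of_abs_sub_le (by simp) (hv.continuousOn.mono hIx) hx.1.le
    hM0 hMx fun s hs K hK ↦ abs_sub_integral_le ht0 hh hh0 hv hv0 hv'0 hvode hcM (hIx hs) hK
  linarith
end

section
/- Let $\theta \in C^2[0,1]$ be a positive solution of $\mu\theta'' + \theta(m(x) - \theta) = 0$ on $(0,1)$ with $\theta'(0) = \theta'(1) = 0$, where $\mu > 0$ and $m$ is continuous and non-decreasing on $[0,1]$ with $m(0) < \theta(0)$. If $\theta$ is non-constant and $\min_{[0,1]}\max(m,0) < \theta < \max_{[0,1]} m$ on $[0,1]$, then $\theta'(x) > 0$ for all $x \in (0,1)$. -/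
/-!
The equation reads `μ θ'' = θ (θ - m)`, and by continuity it holds at the endpoints too. Since
`m 0 < θ 0`, `θ'' 0 > 0`, so `θ' > 0` just to the right of `0`. If `θ'` fails to be positive
somewhere in `(0,1)`, let `x₁` be the first point with `θ' x₁ ≤ 0`; then `θ'' x₁ ≤ 0`, i.e.
`θ x₁ ≤ m x₁ =: c`. On `[x₁,1]` the function `v = θ - c` satisfies `v'' ≤ (max θ / μ) v⁺`,
`v x₁ ≤ 0` and `v' x₁ ≤ 0`, and comparing `v` with the barriers `ε e^{k (x - x₁)}` shows `v ≤ 0`.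
Thus `θ ≤ c ≤ m`, hence `θ'' ≤ 0` and `θ' ≤ 0` on `[x₁,1]`. With `θ' 1 = 0` this forces
`θ'' 1 ≥ 0`, whereas `θ 1 < max m = m 1` gives `θ'' 1 < 0`.
-/

open Set Filter Topology Real

theorem exists_first_nonpos {f : ℝ → ℝ} {a b : ℝ} (hf : ContinuousOn f (Ioc a b))
    (ha : ∀ᶠ x in 𝓝[>] a, 0 < f x) (hab : a < b) (hb : f b ≤ 0) :
    ∃ c ∈ Ioc a b, f c ≤ 0 ∧ ∀ x ∈ Ioo a c, 0 < f x := by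
  obtain ⟨u, hau, hu⟩ := mem_nhdsGT_iff_exists_Ioo_subset.1 ha
  have hub : u ≤ b := not_lt.1 fun hbu => (hu ⟨hab, hbu⟩ : 0 < f b).not_ge hb
  set K := Icc u b ∩ f ⁻¹' Iic 0
  have hK : IsCompact K := isCompact_Icc.of_isClosed_subset
    ((hf.mono (Icc_subset_Ioc hau le_rfl)).preimage_isClosed_of_isClosed isClosed_Icc isClosed_Iic)
    inter_subset_left
  obtain ⟨c, ⟨⟨huc, hcb⟩, hc⟩, hleast⟩ := hK.exists_isLeast ⟨b, ⟨hub, le_rfl⟩, hb⟩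
  refine ⟨c, ⟨lt_of_lt_of_le hau huc, hcb⟩, hc, fun x hx => ?_⟩
  by_cases hxu : x < u
  · exact hu ⟨hx.1, hxu⟩
  · by_contra! hfx
    exact hx.2.not_ge (hleast ⟨⟨not_lt.1 hxu, hx.2.le.trans hcb⟩, hfx⟩)

theorem antitoneOn_Icc_of_hasDerivAt_nonpos {f f' : ℝ → ℝ} {a b : ℝ}
    (hf : ContinuousOn f (Icc a b)) (hdf : ∀ x ∈ Ioo a b, HasDerivAt f (f' x) x)
    (hf' : ∀ x ∈ Ioo a b, f' x ≤ 0) : AntitoneOn f (Icc a b) :=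
  antitoneOn_of_hasDerivWithinAt_nonpos (convex_Icc a b) hf
    (by simpa only [interior_Icc] using fun x hx => (hdf x hx).hasDerivWithinAt)
    (by simpa only [interior_Icc] using hf')

theorem antitoneOn_Icc_of_deriv2_nonpos {f f' f'' : ℝ → ℝ} {a b : ℝ}
    (hf : ContinuousOn f (Icc a b)) (hf' : ContinuousOn f' (Icc a b))
    (hdf : ∀ x ∈ Ioo a b, HasDerivAt f (f' x) x) (hdf' : ∀ x ∈ Ioo a b, HasDerivAt f' (f'' x) x)
    (hf'' : ∀ x ∈ Ioo a b, f'' x ≤ 0) (ha : f' a ≤ 0) : AntitoneOn f (Icc a b) :=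
  antitoneOn_Icc_of_hasDerivAt_nonpos hf hdf fun _ hx =>
    (antitoneOn_Icc_of_hasDerivAt_nonpos hf' hdf' hf'' ⟨le_rfl, (hx.1.trans hx.2).le⟩
      (Ioo_subset_Icc_self hx) hx.1.le).trans ha

theorem eventually_pos_of_hasDerivWithinAt_Ioi {f : ℝ → ℝ} {f' a : ℝ}
    (hd : HasDerivWithinAt f f' (Ioi a) a) (hf' : 0 < f') (ha : f a = 0) :
    ∀ᶠ x in 𝓝[>] a, 0 < f x := by
  filter_upwards [((hasDerivWithinAt_iff_tendsto_slope' (lt_irrefl a)).1 hd).eventually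
    (lt_mem_nhds hf'), self_mem_nhdsWithin] with x hslope hx
  exact pos_of_slope_pos hx hslope ha

theorem HasDerivWithinAt.nonpos_of_eventually_ge_left {f : ℝ → ℝ} {f' a : ℝ}
    (hd : HasDerivWithinAt f f' (Iio a) a) (hf : ∀ᶠ x in 𝓝[<] a, f a ≤ f x) : f' ≤ 0 := by
  refine le_of_tendsto ((hasDerivWithinAt_iff_tendsto_slope' (s := Iio a) (lt_irrefl a)).1 hd) ?_
  filter_upwards [hf, self_mem_nhdsWithin] with x hfx hx
  rw [slope_def_field]
  exact div_nonpos_of_nonneg_of_nonpos (sub_nonneg.2 hfx) (sub_nonpos.2 (le_of_lt hx))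

theorem HasDerivWithinAt.nonneg_of_eventually_le_left {f : ℝ → ℝ} {f' a : ℝ}
    (hd : HasDerivWithinAt f f' (Iio a) a) (hf : ∀ᶠ x in 𝓝[<] a, f x ≤ f a) : 0 ≤ f' := by
  simpa using hd.neg.nonpos_of_eventually_ge_left (by simpa using hf)

theorem lt_exp_of_deriv2_le_mul_max {v v' v'' : ℝ → ℝ} {a b L k ε : ℝ}
    (hv : ContinuousOn v (Icc a b)) (hv' : ContinuousOn v' (Icc a b))
    (hdv : ∀ x ∈ Ioo a b, HasDerivAt v (v' x) x) (hdv' : ∀ x ∈ Ioo a b, HasDerivAt v' (v'' x) x)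
    (hv'' : ∀ x ∈ Ioo a b, v'' x ≤ L * max (v x) 0) (ha : v a ≤ 0) (ha' : v' a ≤ 0)
    (hk : 0 ≤ k) (hkL : |L| ≤ k ^ 2) (hε : 0 < ε) :
    ∀ x ∈ Icc a b, v x < ε * exp (k * (x - a)) := by
  intro x hx
  by_contra! hvx
  set φ : ℝ → ℝ := fun t => ε * exp (k * (t - a))
  have hφc : Continuous φ := by fun_prop
  have hφ : ∀ t, HasDerivAt φ (k * φ t) t := fun t => by
    simpa [φ, mul_comm, mul_left_comm] using
      (((hasDerivAt_id t).sub_const a).const_mul k).exp.const_mul ε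
  have hφ' : ∀ t, HasDerivAt (fun t => k * φ t) (k ^ 2 * φ t) t := fun t => by
    simpa [sq, mul_assoc] using (hφ t).const_mul k
  have hax : a < x := lt_of_le_of_ne hx.1 fun h => by subst h; simp at hvx; linarith
  have hsub : Icc a x ⊆ Icc a b := Icc_subset_Icc le_rfl hx.2
  obtain ⟨c, hc, hvc, hlt⟩ := exists_first_nonpos (f := fun t => φ t - v t)
    ((hφc.continuousOn.sub hv).mono (Ioc_subset_Icc_self.trans hsub))
    (((hφc.continuousOn.sub hv).continuousWithinAt ⟨le_rfl, hax.le.trans hx.2⟩).eventually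
      (lt_mem_nhds (by simp [φ]; linarith)) |>.filter_mono
      (nhdsWithin_le_of_mem (Icc_mem_nhdsGT (hax.trans_le hx.2))))
    hax (by simp [φ] at hvx ⊢; linarith)
  -- below `φ` we have `v'' ≤ |L| φ ≤ k ^ 2 φ = φ''`, so `v - φ` decreases from `v a - ε < 0`
  have hcx : Icc a c ⊆ Icc a b := (Icc_subset_Icc le_rfl hc.2).trans hsub
  have hIoo : Ioo a c ⊆ Ioo a b := Ioo_subset_Ioo le_rfl (hc.2.trans hx.2)
  have hconcave : ∀ t ∈ Ioo a c, v'' t - k ^ 2 * φ t ≤ 0 := fun t ht => by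
    have hφt : 0 < φ t := by positivity
    have : L * max (v t) 0 ≤ |L| * φ t :=
      mul_le_mul (le_abs_self L) (max_le (by linarith [hlt t ht]) hφt.le) (le_max_right _ _)
        (abs_nonneg L)
    nlinarith [hv'' t (hIoo ht)]
  have hanti := antitoneOn_Icc_of_deriv2_nonpos (f := fun t => v t - φ t)
    ((hv.sub hφc.continuousOn).mono hcx)
    ((hv'.sub (continuous_const.mul hφc).continuousOn).mono hcx)
    (fun t ht => (hdv t (hIoo ht)).sub (hφ t)) (fun t ht => (hdv' t (hIoo ht)).sub (hφ' t))
    hconcave (by simp [φ]; nlinarith)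
  have := hanti (left_mem_Icc.2 hc.1.le) (right_mem_Icc.2 hc.1.le) hc.1.le
  simp [φ] at this hvc
  linarith

theorem nonpos_of_deriv2_le_mul_max {v v' v'' : ℝ → ℝ} {a b L : ℝ}
    (hv : ContinuousOn v (Icc a b)) (hv' : ContinuousOn v' (Icc a b))
    (hdv : ∀ x ∈ Ioo a b, HasDerivAt v (v' x) x) (hdv' : ∀ x ∈ Ioo a b, HasDerivAt v' (v'' x) x)
    (hv'' : ∀ x ∈ Ioo a b, v'' x ≤ L * max (v x) 0) (ha : v a ≤ 0) (ha' : v' a ≤ 0) :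
    ∀ x ∈ Icc a b, v x ≤ 0 := by
  intro x hx
  by_contra! hvx
  have := lt_exp_of_deriv2_le_mul_max hv hv' hdv hdv' hv'' ha ha' (k := |L| + 1)
    (ε := v x / exp ((|L| + 1) * (x - a))) (by positivity) (by nlinarith [abs_nonneg L])
    (by positivity) x hx
  rw [div_mul_cancel₀ _ (exp_pos _).ne'] at this
  exact lt_irrefl _ this

theorem logistic_deriv_nonpos_of_deriv_nonpos {μ K a b x₀ : ℝ} {m θ θ' θ'' : ℝ → ℝ} (hμ : 0 < μ)
    (hθ : ContinuousOn θ (Icc a b)) (hθ' : ContinuousOn θ' (Icc a b))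
    (hdθ : ∀ x ∈ Ioo a b, HasDerivAt θ (θ' x) x) (hdθ' : ∀ x ∈ Ioo a b, HasDerivAt θ' (θ'' x) x)
    (hode : ∀ x ∈ Icc a b, μ * θ'' x = θ x * (θ x - m x))
    (hθ₀ : ∀ x ∈ Icc a b, 0 ≤ θ x) (hθK : ∀ x ∈ Icc a b, θ x ≤ K) (hm : MonotoneOn m (Icc a b))
    (hx₀ : x₀ ∈ Icc a b) (hθx₀ : θ x₀ ≤ m x₀) (hθ'x₀ : θ' x₀ ≤ 0) :
    ∀ x ∈ Icc x₀ b, θ' x ≤ 0 := by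
  have hsub : Icc x₀ b ⊆ Icc a b := Icc_subset_Icc hx₀.1 le_rfl
  have hsubo : Ioo x₀ b ⊆ Ioo a b := Ioo_subset_Ioo hx₀.1 le_rfl
  have hmx₀ : ∀ x ∈ Ioo x₀ b, m x₀ ≤ m x := fun x hx =>
    hm hx₀ (hsub (Ioo_subset_Icc_self hx)) hx.1.le
  have hθm : ∀ x ∈ Icc x₀ b, θ x - m x₀ ≤ 0 := by
    refine nonpos_of_deriv2_le_mul_max (L := K / μ) ((hθ.sub continuousOn_const).mono hsub)
      (hθ'.mono hsub) (fun x hx => (hdθ x (hsubo hx)).sub_const _) (fun x hx => hdθ' x (hsubo hx))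
      (fun x hx => ?_) (by linarith) hθ'x₀
    have hx' := hsub (Ioo_subset_Icc_self hx)
    rw [div_mul_eq_mul_div, le_div_iff₀ hμ, mul_comm, hode x hx']
    have := hθ₀ x hx'; have := hθK x hx'; have := hmx₀ x hx
    rcases le_total (θ x) (m x₀) with h | h
    · rw [max_eq_right (by linarith)]; nlinarith
    · rw [max_eq_left (by linarith)]; nlinarith
  intro x hx
  refine le_trans (antitoneOn_Icc_of_hasDerivAt_nonpos (hθ'.mono hsub)
    (fun y hy => hdθ' y (hsubo hy)) (fun y hy => ?_) (left_mem_Icc.2 (hx.1.trans hx.2)) hx hx.1)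
    hθ'x₀
  have hy' := hsub (Ioo_subset_Icc_self hy)
  have := hθ₀ y hy'; have := hθm y (Ioo_subset_Icc_self hy); have := hmx₀ y hy
  nlinarith [hode y hy']

theorem DifferentiableOn.hasDerivAt_derivWithin_Icc {f : ℝ → ℝ} {a b x : ℝ}
    (hf : DifferentiableOn ℝ f (Icc a b)) (hx : x ∈ Ioo a b) :
    HasDerivAt f (derivWithin f (Icc a b) x) x :=
  (hf x (Ioo_subset_Icc_self hx)).hasDerivWithinAt.hasDerivAt (Icc_mem_nhds hx.1 hx.2)

theorem logistic_ode_Icc {μ a b : ℝ} {m θ : ℝ → ℝ} (hab : a < b) (hm : ContinuousOn m (Icc a b))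
    (hθ : ContDiffOn ℝ 2 θ (Icc a b))
    (hode : ∀ x ∈ Ioo a b,
      μ * derivWithin (derivWithin θ (Icc a b)) (Icc a b) x + θ x * (m x - θ x) = 0) :
    ∀ x ∈ Icc a b,
      μ * derivWithin (derivWithin θ (Icc a b)) (Icc a b) x = θ x * (θ x - m x) := by
  have hθ'' : ContinuousOn (derivWithin (derivWithin θ (Icc a b)) (Icc a b)) (Icc a b) :=
    (hθ.derivWithin (uniqueDiffOn_Icc hab) le_rfl).continuousOn_derivWithin
      (uniqueDiffOn_Icc hab) le_rfl
  intro x hx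
  simpa [sub_eq_zero] using EqOn.of_subset_closure (g := 0)
    (fun y hy => by simp; linarith [hode y hy])
    ((continuousOn_const.mul hθ'').sub (hθ.continuousOn.mul (hθ.continuousOn.sub hm)))
    continuousOn_const Ioo_subset_Icc_self (closure_Ioo hab.ne).ge hx

theorem theta_increasing_of_monotone_m_general (μ : ℝ) (hμ : 0 < μ) (m θ : ℝ → ℝ)
    (hm : ContinuousOn m (Icc 0 1)) (hmono : MonotoneOn m (Icc 0 1))
    (hθreg : ContDiffOn ℝ 2 θ (Icc 0 1))
    (hθpos : ∀ x ∈ Icc (0:ℝ) 1, 0 < θ x)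
    (hode : ∀ x ∈ Ioo (0:ℝ) 1,
      μ * derivWithin (derivWithin θ (Icc 0 1)) (Icc 0 1) x + θ x * (m x - θ x) = 0)
    (hbc0 : derivWithin θ (Icc 0 1) 0 = 0) (hbc1 : derivWithin θ (Icc 0 1) 1 = 0)
    (hm0 : m 0 < θ 0)
    (hbounds : ∀ x ∈ Icc (0:ℝ) 1,
      sInf ((fun y => max (m y) 0) '' Icc (0:ℝ) 1) < θ x ∧ θ x < sSup (m '' Icc (0:ℝ) 1)) :
    ∀ x ∈ Ioo (0:ℝ) 1, 0 < derivWithin θ (Icc 0 1) x := by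
  set θ' := derivWithin θ (Icc 0 1)
  set θ'' := derivWithin θ' (Icc 0 1)
  have h0 : (0:ℝ) ∈ Icc 0 1 := left_mem_Icc.2 zero_le_one
  have h1 : (1:ℝ) ∈ Icc 0 1 := right_mem_Icc.2 zero_le_one
  have hθ' : ContDiffOn ℝ 1 θ' (Icc 0 1) := hθreg.derivWithin (uniqueDiffOn_Icc one_pos) le_rfl
  have hθ'd : ∀ x ∈ Icc (0:ℝ) 1, HasDerivWithinAt θ' (θ'' x) (Icc 0 1) x := fun x hx =>
    (hθ'.differentiableOn one_ne_zero x hx).hasDerivWithinAt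
  have hode' : ∀ x ∈ Icc (0:ℝ) 1, μ * θ'' x = θ x * (θ x - m x) :=
    logistic_ode_Icc one_pos hm hθreg hode
  have hθM : ∀ x ∈ Icc (0:ℝ) 1, θ x < m 1 := fun x hx =>
    (hbounds x hx).2.trans_eq (hmono.map_isGreatest (isGreatest_Icc zero_le_one)).csSup_eq
  intro z hz
  by_contra! hθ'z
  have hθ'0 : ∀ᶠ x in 𝓝[>] 0, 0 < θ' x :=
    eventually_pos_of_hasDerivWithinAt_Ioi ((hθ'd 0 h0).mono_of_mem_nhdsWithin
      (Icc_mem_nhdsGT one_pos)) (by nlinarith [hode' 0 h0, hθpos 0 h0]) hbc0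
  obtain ⟨x₁, hx₁, hθ'x₁, hθ'pos⟩ := exists_first_nonpos
    (hθ'.continuousOn.mono (Ioc_subset_Icc_self.trans (Icc_subset_Icc le_rfl hz.2.le)))
    hθ'0 hz.1 hθ'z
  have hx₁I : x₁ ∈ Icc (0:ℝ) 1 := ⟨hx₁.1.le, hx₁.2.trans hz.2.le⟩
  have hθ''x₁ : θ'' x₁ ≤ 0 :=
    ((hθ'.differentiableOn one_ne_zero).hasDerivAt_derivWithin_Icc ⟨hx₁.1, hx₁.2.trans_lt hz.2⟩
      ).hasDerivWithinAt.nonpos_of_eventually_ge_left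
      (by filter_upwards [Ioo_mem_nhdsLT hx₁.1] with x hx using hθ'x₁.trans (hθ'pos x hx).le)
  have hθ'neg := logistic_deriv_nonpos_of_deriv_nonpos hμ hθreg.continuousOn hθ'.continuousOn
    (fun x => (hθreg.differentiableOn two_ne_zero).hasDerivAt_derivWithin_Icc)
    (fun x => (hθ'.differentiableOn one_ne_zero).hasDerivAt_derivWithin_Icc) hode'
    (fun x hx => (hθpos x hx).le) (fun x hx => (hθM x hx).le) hmono hx₁I
    (by nlinarith [hode' x₁ hx₁I, hθpos x₁ hx₁I]) hθ'x₁
  have hθ''1 : 0 ≤ θ'' 1 :=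
    ((hθ'd 1 h1).mono_of_mem_nhdsWithin (Icc_mem_nhdsLT one_pos)).nonneg_of_eventually_le_left
      (by filter_upwards [Ioo_mem_nhdsLT (hx₁.2.trans_lt hz.2)] with x hx using
        hbc1 ▸ hθ'neg x (Ioo_subset_Icc_self hx))
  nlinarith [hode' 1 h1, hθpos 1 h1, hθM 1 h1]

/-- For the Neumann logistic steady state with non-decreasing resource `m`,
the solution `θ` is strictly increasing on `(0,1)`. -/
theorem theta_increasing_of_monotone_m (μ : ℝ) (hμ : 0 < μ) (m θ : ℝ → ℝ)
    (hm : ContinuousOn m (Icc 0 1)) (hmono : MonotoneOn m (Icc 0 1))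
    (hθreg : ContDiffOn ℝ 2 θ (Icc 0 1))
    (hθpos : ∀ x ∈ Icc (0:ℝ) 1, 0 < θ x)
    (hode : ∀ x ∈ Ioo (0:ℝ) 1,
      μ * derivWithin (derivWithin θ (Icc 0 1)) (Icc 0 1) x + θ x * (m x - θ x) = 0)
    (hbc0 : derivWithin θ (Icc 0 1) 0 = 0) (hbc1 : derivWithin θ (Icc 0 1) 1 = 0)
    (hm0 : m 0 < θ 0)
    (hnonconst : ∃ x ∈ Icc (0:ℝ) 1, ∃ y ∈ Icc (0:ℝ) 1, θ x ≠ θ y)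
    (hbounds : ∀ x ∈ Icc (0:ℝ) 1,
      sInf ((fun y => max (m y) 0) '' Icc (0:ℝ) 1) < θ x ∧ θ x < sSup (m '' Icc (0:ℝ) 1)) :
    ∀ x ∈ Ioo (0:ℝ) 1, 0 < derivWithin θ (Icc 0 1) x :=
  theta_increasing_of_monotone_m_general μ hμ m θ hm hmono hθreg hθpos hode hbc0 hbc1 hm0 hbounds
end

section
/- Let $\theta, \theta_\mu \in C^2[0,1]$ satisfy $\mu\theta'' + \theta(m-\theta) = 0$ and $\mu\theta_\mu'' + (m - 2\theta)\theta_\mu = -\theta''$ on $(0,1)$, with $\theta'(0)=\theta'(1)=\theta_\mu'(0)=\theta_\mu'(1)=0$ and $\theta > 0$. Then $\int_0^1 \theta^2 \theta_\mu\,dx = -\int_0^1 (\theta')^2\,dx$. -/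
/-!
Multiplying the equation for `θ` by `θ_μ`, the one for `θ_μ` by `θ` and subtracting gives
`θ² θ_μ = θ θ'' - μ (θ_μ θ'' - θ θ_μ'')` pointwise. Under Neumann boundary conditions,
integration by parts turns `∫ θ θ''` into `-∫ (θ')²` and makes the Wronskian term
`∫ (θ_μ θ'' - θ θ_μ'')` vanish.
-/

open Set intervalIntegral

section NeumannIntegrationByParts

variable {u v : ℝ → ℝ} {a b : ℝ}

theorem integral_mul_derivWithin_Icc (hab : a < b) (hu : ContDiffOn ℝ 1 u (Icc a b))
    (hv : ContDiffOn ℝ 1 v (Icc a b)) :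
    ∫ x in a..b, u x * derivWithin v (Icc a b) x
      = u b * v b - u a * v a - ∫ x in a..b, derivWithin u (Icc a b) x * v x := by
  have hI : uIcc a b = Icc a b := uIcc_of_le hab.le
  have hs : UniqueDiffOn ℝ (Icc a b) := uniqueDiffOn_Icc hab
  refine integral_mul_deriv_eq_deriv_mul_of_hasDerivWithinAt (fun x hx ↦ ?_) (fun x hx ↦ ?_) ?_ ?_
  · rw [hI] at hx ⊢
    exact (hu.differentiableOn one_ne_zero x hx).hasDerivWithinAt
  · rw [hI] at hx ⊢
    exact (hv.differentiableOn one_ne_zero x hx).hasDerivWithinAt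
  · exact (hu.continuousOn_derivWithin hs le_rfl).intervalIntegrable_of_Icc hab.le
  · exact (hv.continuousOn_derivWithin hs le_rfl).intervalIntegrable_of_Icc hab.le

theorem integral_mul_derivWithin_derivWithin_of_neumann (hab : a < b)
    (hu : ContDiffOn ℝ 1 u (Icc a b)) (hv : ContDiffOn ℝ 2 v (Icc a b))
    (ha : derivWithin v (Icc a b) a = 0) (hb : derivWithin v (Icc a b) b = 0) :
    ∫ x in a..b, u x * derivWithin (derivWithin v (Icc a b)) (Icc a b) x
      = -∫ x in a..b, derivWithin u (Icc a b) x * derivWithin v (Icc a b) x := by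
  rw [integral_mul_derivWithin_Icc hab hu (hv.derivWithin (uniqueDiffOn_Icc hab) le_rfl), ha, hb]
  ring

theorem intervalIntegrable_mul_derivWithin_derivWithin (hab : a < b)
    (hu : ContinuousOn u (Icc a b)) (hv : ContDiffOn ℝ 2 v (Icc a b)) :
    IntervalIntegrable (fun x ↦ u x * derivWithin (derivWithin v (Icc a b)) (Icc a b) x)
      MeasureTheory.volume a b := by
  have hs : UniqueDiffOn ℝ (Icc a b) := uniqueDiffOn_Icc hab
  have hv'' := (hv.derivWithin hs le_rfl).continuousOn_derivWithin hs le_rfl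
  exact (hu.mul hv'').intervalIntegrable_of_Icc hab.le

end NeumannIntegrationByParts

theorem integral_identity_general (μ : ℝ) (m θ θμ : ℝ → ℝ)
    (hθreg : ContDiffOn ℝ 2 θ (Icc 0 1)) (hθμreg : ContDiffOn ℝ 2 θμ (Icc 0 1))
    (hode : ∀ x ∈ Ioo (0:ℝ) 1,
      μ * derivWithin (derivWithin θ (Icc 0 1)) (Icc 0 1) x + θ x * (m x - θ x) = 0)
    (hodeμ : ∀ x ∈ Ioo (0:ℝ) 1,
      μ * derivWithin (derivWithin θμ (Icc 0 1)) (Icc 0 1) x + (m x - 2 * θ x) * θμ x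
        = -derivWithin (derivWithin θ (Icc 0 1)) (Icc 0 1) x)
    (hbc0 : derivWithin θ (Icc 0 1) 0 = 0) (hbc1 : derivWithin θ (Icc 0 1) 1 = 0)
    (hbcμ0 : derivWithin θμ (Icc 0 1) 0 = 0) (hbcμ1 : derivWithin θμ (Icc 0 1) 1 = 0) :
    ∫ x in (0:ℝ)..1, (θ x) ^ 2 * θμ x
      = -∫ x in (0:ℝ)..1, (derivWithin θ (Icc 0 1) x) ^ 2 := by
  set θ'' := derivWithin (derivWithin θ (Icc 0 1)) (Icc 0 1)
  set θμ'' := derivWithin (derivWithin θμ (Icc 0 1)) (Icc 0 1)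
  have hpt : EqOn (fun x ↦ θ x ^ 2 * θμ x)
      (fun x ↦ θ x * θ'' x - μ * (θμ x * θ'' x - θ x * θμ'' x)) (Ioo 0 1) := fun x hx ↦ by
    linear_combination θμ x * hode x hx - θ x * hodeμ x hx
  have h01 : (0:ℝ) < 1 := one_pos
  have hθ1 := hθreg.of_le one_le_two
  have hθμ1 := hθμreg.of_le one_le_two
  have hθθ'' := intervalIntegrable_mul_derivWithin_derivWithin h01 hθreg.continuousOn hθreg
  have hθμθ'' := intervalIntegrable_mul_derivWithin_derivWithin h01 hθμreg.continuousOn hθreg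
  have hθθμ'' := intervalIntegrable_mul_derivWithin_derivWithin h01 hθreg.continuousOn hθμreg
  rw [integral_congr_Ioo_of_le h01.le hpt, integral_sub hθθ'' ((hθμθ''.sub hθθμ'').const_mul μ),
    integral_const_mul, integral_sub hθμθ'' hθθμ'',
    integral_mul_derivWithin_derivWithin_of_neumann h01 hθ1 hθreg hbc0 hbc1,
    integral_mul_derivWithin_derivWithin_of_neumann h01 hθμ1 hθreg hbc0 hbc1,
    integral_mul_derivWithin_derivWithin_of_neumann h01 hθ1 hθμreg hbcμ0 hbcμ1]
  simp only [mul_comm (derivWithin θμ (Icc 0 1) _), ← sq]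
  ring

/-- Integrating the Wronskian identity over `[0,1]` with Neumann boundary conditions gives
`∫₀¹ θ² θ_μ = -∫₀¹ (θ')²`. -/
theorem integral_identity (μ : ℝ) (hμ : 0 < μ) (m θ θμ : ℝ → ℝ)
    (hm : ContinuousOn m (Icc 0 1))
    (hθreg : ContDiffOn ℝ 2 θ (Icc 0 1)) (hθμreg : ContDiffOn ℝ 2 θμ (Icc 0 1))
    (hθpos : ∀ x ∈ Icc (0:ℝ) 1, 0 < θ x)
    (hode : ∀ x ∈ Ioo (0:ℝ) 1,
      μ * derivWithin (derivWithin θ (Icc 0 1)) (Icc 0 1) x + θ x * (m x - θ x) = 0)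
    (hodeμ : ∀ x ∈ Ioo (0:ℝ) 1,
      μ * derivWithin (derivWithin θμ (Icc 0 1)) (Icc 0 1) x + (m x - 2 * θ x) * θμ x
        = -derivWithin (derivWithin θ (Icc 0 1)) (Icc 0 1) x)
    (hbc0 : derivWithin θ (Icc 0 1) 0 = 0) (hbc1 : derivWithin θ (Icc 0 1) 1 = 0)
    (hbcμ0 : derivWithin θμ (Icc 0 1) 0 = 0) (hbcμ1 : derivWithin θμ (Icc 0 1) 1 = 0) :
    ∫ x in (0:ℝ)..1, (θ x) ^ 2 * θμ x
      = -∫ x in (0:ℝ)..1, (derivWithin θ (Icc 0 1) x) ^ 2 :=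
  integral_identity_general μ m θ θμ hθreg hθμreg hode hodeμ hbc0 hbc1 hbcμ0 hbcμ1
end

section
/- Let $\theta, \theta_\mu \in C^2[0,1]$ satisfy $\mu\theta'' + \theta(m-\theta) = 0$ and $\mu\theta_\mu'' + (m-2\theta)\theta_\mu = -\theta''$ on $(0,1)$ with Neumann boundary conditions for both, $\theta > 0$, and $\theta$ non-constant. Then $\theta_\mu$ must be strictly negative at some point of $[0,1]$. -/
open Set

/-- If `θ` is a positive non-constant Neumann steady state of the logistic equation and `θ_μ`
solves the linearized (μ-derivative) Neumann problem, then `θ_μ` is negative somewhere. -/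
theorem theta_mu_negative_somewhere (μ : ℝ) (hμ : 0 < μ) (m θ θμ : ℝ → ℝ)
    (hm : ContinuousOn m (Icc 0 1))
    (hθreg : ContDiffOn ℝ 2 θ (Icc 0 1)) (hθμreg : ContDiffOn ℝ 2 θμ (Icc 0 1))
    (hθpos : ∀ x ∈ Icc (0:ℝ) 1, 0 < θ x)
    (hnonconst : ∃ x ∈ Icc (0:ℝ) 1, ∃ y ∈ Icc (0:ℝ) 1, θ x ≠ θ y)
    (hode : ∀ x ∈ Ioo (0:ℝ) 1,
      μ * derivWithin (derivWithin θ (Icc 0 1)) (Icc 0 1) x + θ x * (m x - θ x) = 0)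
    (hodeμ : ∀ x ∈ Ioo (0:ℝ) 1,
      μ * derivWithin (derivWithin θμ (Icc 0 1)) (Icc 0 1) x + (m x - 2 * θ x) * θμ x
        = -derivWithin (derivWithin θ (Icc 0 1)) (Icc 0 1) x)
    (hbc0 : derivWithin θ (Icc 0 1) 0 = 0) (hbc1 : derivWithin θ (Icc 0 1) 1 = 0)
    (hbcμ0 : derivWithin θμ (Icc 0 1) 0 = 0) (hbcμ1 : derivWithin θμ (Icc 0 1) 1 = 0) :
    ∃ x ∈ Icc (0:ℝ) 1, θμ x < 0 := by
  by_contra hcon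
  push_neg at hcon
  have hI : UniqueDiffOn ℝ (Icc (0:ℝ) 1) := uniqueDiffOn_Icc (by norm_num)
  set f : ℝ → ℝ := derivWithin θ (Icc 0 1) with hf
  set g : ℝ → ℝ := derivWithin θμ (Icc 0 1) with hg
  set f' : ℝ → ℝ := derivWithin f (Icc 0 1) with hf'
  set g' : ℝ → ℝ := derivWithin g (Icc 0 1) with hg'
  have hθdiff : DifferentiableOn ℝ θ (Icc 0 1) := hθreg.differentiableOn (by norm_num)
  have hθμdiff : DifferentiableOn ℝ θμ (Icc 0 1) := hθμreg.differentiableOn (by norm_num)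
  have hfcd : ContDiffOn ℝ 1 f (Icc 0 1) := hθreg.derivWithin hI (by norm_num)
  have hgcd : ContDiffOn ℝ 1 g (Icc 0 1) := hθμreg.derivWithin hI (by norm_num)
  have hfdiff : DifferentiableOn ℝ f (Icc 0 1) := hfcd.differentiableOn (by norm_num)
  have hgdiff : DifferentiableOn ℝ g (Icc 0 1) := hgcd.differentiableOn (by norm_num)
  -- the combined function Z
  set Z : ℝ → ℝ := fun x => μ * (g x * θ x - f x * θμ x) + f x * θ x with hZ
  set h : ℝ → ℝ := fun x => θ x ^ 2 * θμ x + f x ^ 2 with hh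
  have hZcont : ContinuousOn Z (Icc 0 1) := by
    apply ContinuousOn.add
    · exact continuousOn_const.mul
        ((hgdiff.continuousOn.mul hθdiff.continuousOn).sub
          (hfdiff.continuousOn.mul hθμdiff.continuousOn))
    · exact hfdiff.continuousOn.mul hθdiff.continuousOn
  have hhcont : ContinuousOn h (Icc 0 1) := by
    apply ContinuousOn.add
    · exact (hθdiff.continuousOn.pow 2).mul hθμdiff.continuousOn
    · exact hfdiff.continuousOn.pow 2
  have hZderiv : ∀ x ∈ Ioo (0:ℝ) 1, HasDerivAt Z (h x) x := by
    intro x hx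
    have hxI : x ∈ Icc (0:ℝ) 1 := Ioo_subset_Icc_self hx
    have hnhds : Icc (0:ℝ) 1 ∈ nhds x := Icc_mem_nhds hx.1 hx.2
    have hθ' : HasDerivAt θ (f x) x :=
      ((hθdiff x hxI).hasDerivWithinAt).hasDerivAt hnhds
    have hθμ' : HasDerivAt θμ (g x) x :=
      ((hθμdiff x hxI).hasDerivWithinAt).hasDerivAt hnhds
    have hfd : HasDerivAt f (f' x) x :=
      ((hfdiff x hxI).hasDerivWithinAt).hasDerivAt hnhds
    have hgd : HasDerivAt g (g' x) x :=
      ((hgdiff x hxI).hasDerivWithinAt).hasDerivAt hnhds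
    have H : HasDerivAt Z
        (μ * ((g' x * θ x + g x * f x) - (f' x * θμ x + f x * g x))
          + (f' x * θ x + f x * f x)) x := by
      exact (((hgd.mul hθ').sub (hfd.mul hθμ')).const_mul μ).add (hfd.mul hθ')
    convert H using 1
    have h1 := hode x hx
    have h2 := hodeμ x hx
    simp only [hh]
    linear_combination (-(θ x)) * h2 + θμ x * h1
  have hhint : IntervalIntegrable h MeasureTheory.volume 0 1 := by
    apply ContinuousOn.intervalIntegrable
    rwa [uIcc_of_le (by norm_num : (0:ℝ) ≤ 1)]
  have key : ∫ x in (0:ℝ)..1, h x = Z 1 - Z 0 :=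
    intervalIntegral.integral_eq_sub_of_hasDeriv_right_of_le (by norm_num) hZcont
      (fun x hx => (hZderiv x hx).hasDerivWithinAt) hhint
  have hZ0 : Z 0 = 0 := by
    show μ * (g 0 * θ 0 - f 0 * θμ 0) + f 0 * θ 0 = 0
    rw [hbc0, hbcμ0]; ring
  have hZ1 : Z 1 = 0 := by
    show μ * (g 1 * θ 1 - f 1 * θμ 1) + f 1 * θ 1 = 0
    rw [hbc1, hbcμ1]; ring
  have hint0 : ∫ x in (0:ℝ)..1, h x = 0 := by rw [key, hZ0, hZ1, sub_zero]
  -- h is nonnegative, so it must vanish identically; in particular f ≡ 0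
  have hnonneg : ∀ x ∈ Icc (0:ℝ) 1, 0 ≤ h x := by
    intro x hx
    have := hθpos x hx
    have := hcon x hx
    simp only [hh]
    positivity
  have hfzero : ∀ x ∈ Icc (0:ℝ) 1, f x = 0 := by
    intro x hx
    by_contra hne
    have hpos : 0 < h x := by
      have h1 : 0 < f x ^ 2 := by positivity
      have h2 : 0 ≤ θ x ^ 2 * θμ x := by
        have := hθpos x hx
        have := hcon x hx
        positivity
      simp only [hh]; linarith
    have : 0 < ∫ x in (0:ℝ)..1, h x :=
      intervalIntegral.integral_pos (by norm_num) hhcont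
        (fun y hy => hnonneg y ⟨le_of_lt hy.1, hy.2⟩) ⟨x, hx, hpos⟩
    linarith [hint0, this]
  have hconst : ∀ x ∈ Icc (0:ℝ) 1, θ x = θ 0 :=
    constant_of_derivWithin_zero hθdiff (fun x hx => hfzero x (Ico_subset_Icc_self hx))
  obtain ⟨x, hx, y, hy, hxy⟩ := hnonconst
  exact hxy (by rw [hconst x hx, hconst y hy])
end
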